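/- Let n ≥ 1 and let Z ∈ so(n). If C is a symmetric real n×n matrix such that I + C is positive definite and (I + Z + C)ᵀ(I + Z + C) = I, then I − ZᵀZ is positive definite and C = √(I − ZᵀZ) − I. (In particular, the symmetric normal adjustment in the tangent-space parametrization R = R₀(I + Z + C) with I + C positive definite is unique.) -/

import Mathlib

/-!
Transposing `Q = I + Z + C` gives `Qᵀ = S - Z` with `S = I + C`, so `Qᵀ Q = I` and `Q Qᵀ = I`
read `(S - Z)(S + Z) = I = (S + Z)(S - Z)`. Adding the two cancels the cross terms `SZ - ZS`
and leaves `S² = I + Z² = I - ZᵀZ`. Hence `I - ZᵀZ` is the square of the positive definite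
matrix `S`, so it is positive definite and `S` is its unique positive semidefinite square root.
-/

open Matrix

/-- The square root of a positive semidefinite matrix, as `Matrix.PosSemidef.sqrt` was defined in
the older Mathlib (it has since been removed). -/
noncomputable def Matrix.PosSemidef.sqrt {n 𝕜 : Type*} [Fintype n] [RCLike 𝕜] [PartialOrder 𝕜]
    [DecidableEq n]
    {A : Matrix n n 𝕜} (hA : A.PosSemidef) : Matrix n n 𝕜 :=
  hA.1.eigenvectorUnitary.1 * diagonal ((↑) ∘ (√·) ∘ hA.1.eigenvalues) *
    (star hA.1.eigenvectorUnitary : Matrix n n 𝕜)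

theorem mul_self_eq_one_add_mul_self_of_mul_eq_one {R : Type*} [Ring R] [IsAddTorsionFree R]
    {S Z : R} (h₁ : (S - Z) * (S + Z) = 1) (h₂ : (S + Z) * (S - Z) = 1) :
    S * S = 1 + Z * Z := by
  have h : 2 • (S * S) = 2 • (1 + Z * Z) := by
    calc 2 • (S * S) = (S - Z) * (S + Z) + (S + Z) * (S - Z) + 2 • (Z * Z) := by noncomm_ring
      _ = 2 • (1 + Z * Z) := by rw [h₁, h₂, ← two_nsmul, ← nsmul_add]
  exact nsmul_right_injective two_ne_zero h

namespace Matrix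

instance {m n α : Type*} [AddMonoid α] [IsAddTorsionFree α] : IsAddTorsionFree (Matrix m n α) :=
  Pi.instIsAddTorsionFree

variable {n 𝕜 : Type*} [Fintype n] [DecidableEq n] [RCLike 𝕜]

open scoped ComplexOrder

theorem PosDef.mul_self {A : Matrix n n 𝕜} (hA : A.PosDef) : (A * A).PosDef := by
  simpa only [hA.1.eq] using
    PosDef.conjTranspose_mul_self A (mulVec_injective_iff_isUnit.mpr hA.isUnit)

open scoped MatrixOrder in
theorem PosSemidef.sqrt_eq_cfcSqrt {A : Matrix n n 𝕜} (hA : A.PosSemidef) :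
    hA.sqrt = CFC.sqrt A := by
  rw [CFC.sqrt_eq_cfc, cfc_nnreal_eq_real _ _, hA.1.cfc_eq]
  simp [PosSemidef.sqrt, IsHermitian.cfc, Function.comp_def,
    fun i => max_eq_left (hA.eigenvalues_nonneg i)]

open scoped MatrixOrder in
theorem PosSemidef.sqrt_eq_of_mul_self {A B : Matrix n n 𝕜} (hA : A.PosSemidef)
    (hB : B.PosSemidef) (h : B * B = A) : hA.sqrt = B := by
  rw [hA.sqrt_eq_cfcSqrt]
  exact CFC.sqrt_unique h hB.nonneg

end Matrix

theorem stmt1_general {n : ℕ} (Z C : Matrix (Fin n) (Fin n) ℝ)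
    (hZ : Zᵀ = -Z) (hC : Cᵀ = C) (hICpd : (1 + C).PosDef)
    (horth : (1 + Z + C)ᵀ * (1 + Z + C) = 1) :
    ∃ hpd : (1 - Zᵀ * Z).PosDef, C = hpd.posSemidef.sqrt - 1 := by
  have hQ : 1 + Z + C = (1 + C) + Z := add_right_comm 1 Z C
  have hQt : (1 + Z + C)ᵀ = (1 + C) - Z := by
    rw [transpose_add, transpose_add, transpose_one, hZ, hC]; abel
  have hsq : (1 + C) * (1 + C) = 1 - Zᵀ * Z := by
    rw [hZ, neg_mul, sub_neg_eq_add]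
    refine mul_self_eq_one_add_mul_self_of_mul_eq_one ?_ ?_
    · rwa [← hQt, ← hQ]
    · rw [← hQt, ← hQ]; exact mul_eq_one_comm.mp horth
  have hpd : (1 - Zᵀ * Z).PosDef := hsq ▸ hICpd.mul_self
  exact ⟨hpd, by rw [hpd.posSemidef.sqrt_eq_of_mul_self hICpd.posSemidef hsq]; abel⟩

/-- Uniqueness of the symmetric normal adjustment: if `Z` is
skew-symmetric, `C` is symmetric, `I + C` is positive definite and
`(I + Z + C)ᵀ (I + Z + C) = I`, then `I - ZᵀZ` is positive definite and
`C = √(I - ZᵀZ) - I`. -/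
theorem stmt1 {n : ℕ} (hn : 1 ≤ n) (Z C : Matrix (Fin n) (Fin n) ℝ)
    (hZ : Zᵀ = -Z) (hC : Cᵀ = C) (hICpd : (1 + C).PosDef)
    (horth : (1 + Z + C)ᵀ * (1 + Z + C) = 1) :
    ∃ hpd : (1 - Zᵀ * Z).PosDef, C = hpd.posSemidef.sqrt - 1 :=
  stmt1_general Z C hZ hC hICpd horth
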